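/- Let G₁ be r₁-regular on n₁ vertices and m₁ edges, and G₂ be r₂-regular on n₂ vertices. Then the adjacency spectrum of the subdivision-edge join G₁∨̲G₂ consists of: λᵢ(G₂) for i=2,…,n₂; 0 with multiplicity m₁−n₁; ±√(r₁+λⱼ(G₁)) for j=2,…,n₁; and the three roots of x³ − r₂x² − (m₁n₂ + 2r₁)x + 2r₁r₂ = 0. -/

import Mathlib

/-!
List the subdivision vertices first. They are pairwise non-adjacent, so for `x ≠ 0` the Schur
complement of the block `x • 1` removes them at the cost of `x ^ m₁`. What remains is a block
matrix on `V₁ ⊕ V₂` built from `R Rᵀ = r₁ • 1 + A(G₁)` (`R` the vertex-edge incidence matrix of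
`G₁`) and from constant matrices, since every subdivision vertex is adjacent to all of `V₂`.
By regularity the all-ones vector is an eigenvector of every block, so a second Schur complement
and the matrix determinant lemma reduce the determinant to scalars, and the handshake identity
`n₁ r₁ = 2 m₁` turns the result into the cubic.
This needs `x ^ 2 - r₁ ∉ spec G₁` and `x ∉ spec G₂`. Both sides are polynomials in `x`, so the
identity holds in `ℝ[X]`, where the factors `x ^ 2 - 2 r₁` and `x - r₂` contributed by the top
eigenvalues `r₁` and `r₂` can be cancelled.
-/

open Matrix BigOperators Finset

attribute [local instance] Classical.propDecidable

/-- The coronal of a matrix `M`: `1ᵀ (xI − M)⁻¹ 1`. -/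
noncomputable def coronal {n : Type*} [Fintype n] [DecidableEq n]
    (M : Matrix n n ℝ) (x : ℝ) : ℝ :=
  (fun _ => (1 : ℝ)) ⬝ᵥ ((x • (1 : Matrix n n ℝ) - M)⁻¹ *ᵥ fun _ => (1 : ℝ))

/-- The adjacency matrix over ℝ (classical decidability). -/
noncomputable def adjM {V : Type*} (G : SimpleGraph V) : Matrix V V ℝ :=
  letI := Classical.decRel G.Adj
  G.adjMatrix ℝ

/-- The Laplacian matrix over ℝ. -/
noncomputable def lapM {V : Type*} [Fintype V] (G : SimpleGraph V) : Matrix V V ℝ :=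
  letI := Classical.decRel G.Adj
  letI : DecidableEq V := Classical.decEq V
  G.lapMatrix ℝ

/-- The signless Laplacian matrix over ℝ. -/
noncomputable def signlessLapM {V : Type*} [Fintype V] (G : SimpleGraph V) : Matrix V V ℝ :=
  letI := Classical.decRel G.Adj
  letI : DecidableEq V := Classical.decEq V
  G.degMatrix ℝ + G.adjMatrix ℝ

noncomputable instance edgeSetFintype {V : Type*} [Finite V] (G : SimpleGraph V) :
    Fintype G.edgeSet := Fintype.ofFinite _

/-- Subdivision-vertex join. -/
def svJoin {V₁ V₂ : Type*} (G₁ : SimpleGraph V₁) (G₂ : SimpleGraph V₂) :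
    SimpleGraph (V₁ ⊕ (G₁.edgeSet ⊕ V₂)) where
  Adj a b :=
    match a, b with
    | Sum.inl v, Sum.inr (Sum.inl e) => v ∈ (e : Sym2 V₁)
    | Sum.inr (Sum.inl e), Sum.inl v => v ∈ (e : Sym2 V₁)
    | Sum.inl _, Sum.inr (Sum.inr _) => True
    | Sum.inr (Sum.inr _), Sum.inl _ => True
    | Sum.inr (Sum.inr w), Sum.inr (Sum.inr w') => G₂.Adj w w'
    | _, _ => False
  symm := by
    constructor
    rintro (v | e | w) (v' | e' | w') h <;> simp_all <;> exact h.symm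
  loopless := by
    constructor
    rintro (v | e | w) h <;> simp_all

/-- Subdivision-edge join. -/
def seJoin {V₁ V₂ : Type*} (G₁ : SimpleGraph V₁) (G₂ : SimpleGraph V₂) :
    SimpleGraph (V₁ ⊕ (G₁.edgeSet ⊕ V₂)) where
  Adj a b :=
    match a, b with
    | Sum.inl v, Sum.inr (Sum.inl e) => v ∈ (e : Sym2 V₁)
    | Sum.inr (Sum.inl e), Sum.inl v => v ∈ (e : Sym2 V₁)
    | Sum.inr (Sum.inl _), Sum.inr (Sum.inr _) => True
    | Sum.inr (Sum.inr _), Sum.inr (Sum.inl _) => True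
    | Sum.inr (Sum.inr w), Sum.inr (Sum.inr w') => G₂.Adj w w'
    | _, _ => False
  symm := by
    constructor
    rintro (v | e | w) (v' | e' | w') h <;> simp_all <;> exact h.symm
  loopless := by
    constructor
    rintro (v | e | w) h <;> simp_all

/-- Number of spanning trees of a graph. -/
noncomputable def spanningTreeCount {V : Type*} (G : SimpleGraph V) : ℕ :=
  Nat.card {H : G.Subgraph // H.IsSpanning ∧ H.coe.IsTree}


def Equiv.sumLeftComm (α β γ : Type*) : α ⊕ (β ⊕ γ) ≃ β ⊕ (α ⊕ γ) :=
  (Equiv.sumAssoc α β γ).symm.trans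
    (((Equiv.sumComm α β).sumCongr (Equiv.refl γ)).trans (Equiv.sumAssoc β α γ))

open Polynomial

theorem Polynomial.eq_of_eval_eq_of_eval_ne_zero {R : Type*} [CommRing R] [IsDomain R]
    [Infinite R] {p q g : R[X]} (hg : g ≠ 0) (h : ∀ x, g.eval x ≠ 0 → p.eval x = q.eval x) :
    p = q :=
  eq_of_infinite_eval_eq p q ((finite_setOfPred_isRoot hg).infinite_compl.mono fun x hx => h x hx)

namespace Matrix

section Field

variable {K m n e : Type*} [Field K] [Fintype m] [Fintype n] [Fintype e]
  [DecidableEq m] [DecidableEq n] [DecidableEq e]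

theorem inv_mulVec_of_mulVec_eq_smul {M : Matrix n n K} (hM : IsUnit M.det) {v : n → K} {a : K}
    (h : M *ᵥ v = a • v) : M⁻¹ *ᵥ v = a⁻¹ • v := by
  have hv : v = a • (M⁻¹ *ᵥ v) := by
    rw [← mulVec_smul, ← h, mulVec_mulVec, nonsing_inv_mul M hM, one_mulVec]
  rcases eq_or_ne a 0 with rfl | ha
  · rw [zero_smul] at hv
    simp [hv]
  · conv_rhs => rw [hv, smul_smul, inv_mul_cancel₀ ha, one_smul]

theorem ne_zero_of_mulVec_one_eq_smul [Nonempty n] {M : Matrix n n K} (hM : M.det ≠ 0) {a : K}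
    (h : M *ᵥ 1 = a • 1) : a ≠ 0 := by
  rintro rfl
  rw [zero_smul] at h
  exact one_ne_zero (eq_zero_of_mulVec_eq_zero hM h)

theorem det_sub_const_of_mulVec_one_eq_smul {M : Matrix n n K} (hM : IsUnit M.det) {a : K}
    (h : M *ᵥ 1 = a • 1) (κ : K) :
    (M - of fun _ _ => κ).det = M.det * (1 - κ * Fintype.card n / a) := by
  have hJ : (M - of fun _ _ => κ) = M + vecMulVec (-κ • 1) 1 := by
    ext i j
    simp [sub_eq_add_neg]
  rw [hJ, vecMulVec_eq Unit, det_add_replicateCol_mul_replicateRow hM, Matrix.mul_assoc,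
    ← replicateCol_mulVec, replicateRow_mul_replicateCol, mulVec_smul,
    inv_mulVec_of_mulVec_eq_smul hM h, det_unique (n := Unit)]
  congr 1
  simp only [Matrix.add_apply, one_apply_eq, of_apply, dotProduct_smul, one_dotProduct_one,
    smul_eq_mul]
  ring

theorem det_fromBlocks_const_of_mulVec_one_eq_smul {M₁ : Matrix m m K} {M₂ : Matrix n n K}
    (hM₁ : IsUnit M₁.det) (hM₂ : IsUnit M₂.det) {a b : K} (h₁ : M₁ *ᵥ 1 = a • 1)
    (h₂ : M₂ *ᵥ 1 = b • 1) (α β γ : K) :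
    (fromBlocks M₁ (of fun _ _ => α) (of fun _ _ => β) (M₂ - of fun _ _ => γ)).det =
      M₁.det * M₂.det * (1 - (γ + α * β * Fintype.card m / a) * Fintype.card n / b) := by
  have := M₁.invertibleOfIsUnitDet hM₁
  have hSchur : (of fun _ _ => γ) +
      (of fun _ _ => β : Matrix n m K) * ⅟M₁ * (of fun _ _ => α : Matrix m n K) =
      of fun _ _ => γ + α * β * Fintype.card m / a := by
    have hrow (k : m) : ∑ l, M₁⁻¹ k l = a⁻¹ := by
      simpa [mulVec, dotProduct] using congrFun (inv_mulVec_of_mulVec_eq_smul hM₁ h₁) k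
    ext i j
    simp only [invOf_eq_nonsing_inv, add_apply, of_apply, mul_apply, ← mul_sum, ← sum_mul]
    rw [sum_comm]
    simp only [hrow, sum_const, card_univ, nsmul_eq_mul]
    ring
  rw [det_fromBlocks₁₁, sub_sub, hSchur, det_sub_const_of_mulVec_one_eq_smul hM₂ h₂, ← mul_assoc]

theorem det_smul_one_sub_fromBlocks_zero₁₁ {x : K} (hx : x ≠ 0) (B : Matrix e n K)
    (C : Matrix n e K) (D : Matrix n n K) :
    (x • 1 - fromBlocks 0 B C D).det =
      x ^ Fintype.card e * (x • 1 - D - x⁻¹ • (C * B)).det := by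
  let _ : Invertible (x • (1 : Matrix e e K)) := invertibleOfRightInverse _ (x⁻¹ • 1) (by
    rw [smul_mul_smul, Matrix.one_mul, mul_inv_cancel₀ hx, one_smul])
  have hinv : ⅟(x • (1 : Matrix e e K)) = x⁻¹ • 1 := rfl
  have hblocks : x • 1 - fromBlocks 0 B C D = fromBlocks (x • 1) (-B) (-C) (x • 1 - D) := by
    ext (i | i) (j | j) <;> simp [one_apply]
  rw [hblocks, det_fromBlocks₁₁, det_smul, det_one, mul_one, hinv, Matrix.mul_smul,
    Matrix.mul_one, Matrix.smul_mul, Matrix.neg_mul, Matrix.mul_neg, neg_neg]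

end Field

section CommRing

variable {R n m : Type*} [CommRing R] [Fintype n] [DecidableEq n] [Fintype m] [DecidableEq m]

theorem det_smul_one_sub_submatrix_equiv (σ : m ≃ n) (A : Matrix n n R) (x : R) :
    (x • 1 - A.submatrix σ σ).det = (x • 1 - A).det := by
  rw [← det_submatrix_equiv_self σ]
  congr 1
  ext i j
  simp [one_apply]

theorem eval_charpoly_eq_det_smul_one_sub (M : Matrix n n R) (t : R) :
    M.charpoly.eval t = (t • 1 - M).det := by
  rw [eval_charpoly, scalar_apply, smul_one_eq_diagonal]

theorem charpoly_eq_prod_of_det [IsDomain R] [Infinite R] {M : Matrix n n R} {μ : n → R}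
    (h : ∀ t : R, (t • 1 - M).det = ∏ i, (t - μ i)) : M.charpoly = ∏ i, (X - C (μ i)) :=
  Polynomial.funext fun t => by simp [eval_charpoly_eq_det_smul_one_sub, h, eval_prod]

end CommRing

end Matrix

namespace SimpleGraph

section Regular

variable {V : Type*} [Fintype V] {G : SimpleGraph V}

theorem IsRegularOfDegree.adjM_mulVec_one {r : ℕ} (h : G.IsRegularOfDegree r) :
    adjM G *ᵥ 1 = (r : ℝ) • 1 := by
  ext v
  simpa [adjM] using adjMatrix_mulVec_const_apply_of_regular (α := ℝ) h (v := v) (a := 1)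

theorem IsRegularOfDegree.card_mul_eq_two_mul_card_edgeSet {r : ℕ} (h : G.IsRegularOfDegree r) :
    Fintype.card V * r = 2 * Fintype.card G.edgeSet := by
  calc Fintype.card V * r = ∑ v, G.degree v := by simp [h.degree_eq]
    _ = 2 * Fintype.card G.edgeSet := by
      refine G.sum_degrees_eq_twice_card_edges.trans ?_
      rw [@edgeFinset_card _ _ G.fintypeEdgeSet, @Fintype.card_congr' _ _ G.fintypeEdgeSet _ rfl]

variable [DecidableEq V]

theorem IsRegularOfDegree.signlessLapM_eq {r : ℕ} (h : G.IsRegularOfDegree r) :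
    signlessLapM G = (r : ℝ) • 1 + adjM G := by
  ext v w
  rcases eq_or_ne v w with rfl | hvw <;> simp [signlessLapM, degMatrix, adjM, h.degree_eq, *]

theorem IsRegularOfDegree.smul_one_sub_adjM_mulVec_one {r : ℕ} (h : G.IsRegularOfDegree r)
    (c : ℝ) : (c • 1 - adjM G) *ᵥ 1 = (c - r) • 1 := by
  rw [sub_mulVec, smul_mulVec, one_mulVec, h.adjM_mulVec_one, sub_smul]

variable (G)

noncomputable def edgeIncMatrix : Matrix V G.edgeSet ℝ := (G.incMatrix ℝ).submatrix id (↑)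

theorem sum_edgeSet_incMatrix_mul (v : V) (f : Sym2 V → ℝ) :
    ∑ e : G.edgeSet, G.incMatrix ℝ v e * f e = ∑ e, G.incMatrix ℝ v e * f e := by
  rw [sum_set_coe (f := fun e => G.incMatrix ℝ v e * f e)]
  refine sum_subset (subset_univ _) fun e _ he => ?_
  rw [incMatrix_of_notMem_incidenceSet _ fun h => he (Set.mem_toFinset.2 h.1), zero_mul]

theorem sum_edgeIncMatrix_apply (v : V) : ∑ e, G.edgeIncMatrix v e = G.degree v := by
  rw [← sum_incMatrix_apply]
  simpa [edgeIncMatrix] using G.sum_edgeSet_incMatrix_mul v 1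

theorem edgeIncMatrix_mul_transpose : G.edgeIncMatrix * G.edgeIncMatrixᵀ = signlessLapM G := by
  ext v w
  have := congrFun₂ (G.incMatrix_mul_transpose (R := ℝ)) v w
  simp only [mul_apply, transpose_apply] at this
  simp only [mul_apply, transpose_apply, edgeIncMatrix, submatrix_apply, id,
    sum_edgeSet_incMatrix_mul, this, signlessLapM]
  rcases eq_or_ne v w with rfl | h <;> simp [degMatrix, *]

variable {G}

theorem IsRegularOfDegree.fromRows_edgeIncMatrix_mul_transpose {r : ℕ}
    (h : G.IsRegularOfDegree r) (W : Type*) :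
    fromRows G.edgeIncMatrix (of fun (_ : W) _ => (1 : ℝ)) *
        (fromRows G.edgeIncMatrix (of fun (_ : W) _ => (1 : ℝ)))ᵀ =
      fromBlocks ((r : ℝ) • 1 + adjM G) (of fun _ _ => (r : ℝ)) (of fun _ _ => (r : ℝ))
        (of fun _ _ => (Fintype.card G.edgeSet : ℝ)) := by
  rw [transpose_fromRows, fromRows_mul_fromCols, edgeIncMatrix_mul_transpose, h.signlessLapM_eq]
  congr 1 <;> ext <;> simp [mul_apply, sum_edgeIncMatrix_apply, h.degree_eq]

end Regular

section seJoin

variable {V₁ V₂ : Type*} [DecidableEq V₁] {G₁ : SimpleGraph V₁} {G₂ : SimpleGraph V₂}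

theorem adjM_seJoin_submatrix_sumLeftComm :
    (adjM (seJoin G₁ G₂)).submatrix (Equiv.sumLeftComm _ _ _) (Equiv.sumLeftComm _ _ _) =
      fromBlocks 0 (fromRows G₁.edgeIncMatrix (of fun _ _ => 1))ᵀ
        (fromRows G₁.edgeIncMatrix (of fun _ _ => 1)) (fromBlocks 0 0 0 (adjM G₂)) := by
  ext (e | v | w) (e' | v' | w') <;>
    simp [adjM, seJoin, edgeIncMatrix, Equiv.sumLeftComm, incMatrix, incidenceSet, adjMatrix_apply]

variable [Fintype V₁] [Fintype V₂] [DecidableEq V₂] {r₁ r₂ : ℕ}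

theorem det_smul_one_sub_adjM_seJoin_of_det_ne_zero [Nonempty V₁] [Nonempty V₂]
    (h₁ : G₁.IsRegularOfDegree r₁) (h₂ : G₂.IsRegularOfDegree r₂) {x : ℝ} (hx : x ≠ 0)
    (hA₁ : ((x ^ 2 - r₁) • 1 - adjM G₁).det ≠ 0) (hA₂ : (x • 1 - adjM G₂).det ≠ 0) :
    x ^ Fintype.card V₁ * (x ^ 2 - 2 * r₁) * (x - r₂) * (x • 1 - adjM (seJoin G₁ G₂)).det =
      x ^ Fintype.card G₁.edgeSet * ((x ^ 2 - r₁) • 1 - adjM G₁).det * (x • 1 - adjM G₂).det *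
        (x ^ 3 - r₂ * x ^ 2 - (Fintype.card G₁.edgeSet * Fintype.card V₂ + 2 * r₁) * x
          + 2 * r₁ * r₂) := by
  set m := Fintype.card G₁.edgeSet
  set K := fromRows G₁.edgeIncMatrix (of fun (_ : V₂) _ => (1 : ℝ))
  have hreindex : (x • 1 - adjM (seJoin G₁ G₂)).det =
      (x • 1 - fromBlocks 0 Kᵀ K (fromBlocks 0 0 0 (adjM G₂))).det := by
    rw [← adjM_seJoin_submatrix_sumLeftComm, det_smul_one_sub_submatrix_equiv]
  have hSchur : x • 1 - fromBlocks 0 0 0 (adjM G₂) - x⁻¹ • (K * Kᵀ) =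
      fromBlocks (x⁻¹ • ((x ^ 2 - r₁) • 1 - adjM G₁)) (of fun _ _ => -(x⁻¹ * r₁))
        (of fun _ _ => -(x⁻¹ * r₁)) ((x • 1 - adjM G₂) - of fun _ _ => x⁻¹ * m) := by
    rw [h₁.fromRows_edgeIncMatrix_mul_transpose]
    ext (i | i) (j | j) <;>
      simp only [Matrix.sub_apply, Matrix.smul_apply, Matrix.add_apply, Matrix.zero_apply,
        one_apply, Sum.inl.injEq, Sum.inr.injEq, reduceCtorEq, if_false, smul_eq_mul, mul_ite,
        mul_one, mul_zero, sub_zero, sub_self, zero_sub, of_apply, fromBlocks_apply₁₁,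
        fromBlocks_apply₁₂, fromBlocks_apply₂₁, fromBlocks_apply₂₂, m]
    split_ifs <;> field_simp <;> ring
  have hM₁ : IsUnit (x⁻¹ • ((x ^ 2 - r₁) • 1 - adjM G₁)).det := by
    rw [isUnit_iff_ne_zero, det_smul]
    exact mul_ne_zero (pow_ne_zero _ (inv_ne_zero hx)) hA₁
  have hrow₁ : (x⁻¹ • ((x ^ 2 - r₁) • 1 - adjM G₁)) *ᵥ 1 = (x⁻¹ * (x ^ 2 - r₁ - r₁)) • 1 := by
    rw [smul_mulVec, h₁.smul_one_sub_adjM_mulVec_one, smul_smul]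
  have hrow₂ := h₂.smul_one_sub_adjM_mulVec_one x
  have ha : x ^ 2 - r₁ - r₁ ≠ 0 :=
    ne_zero_of_mulVec_one_eq_smul hA₁ (h₁.smul_one_sub_adjM_mulVec_one _)
  have hb : x - r₂ ≠ 0 := ne_zero_of_mulVec_one_eq_smul hA₂ hrow₂
  have hhandshake : (Fintype.card V₁ * r₁ : ℝ) = 2 * m := by
    exact_mod_cast h₁.card_mul_eq_two_mul_card_edgeSet
  rw [hreindex, det_smul_one_sub_fromBlocks_zero₁₁ hx, hSchur,
    det_fromBlocks_const_of_mulVec_one_eq_smul hM₁ (isUnit_iff_ne_zero.2 hA₂) hrow₁ hrow₂,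
    det_smul, inv_pow]
  field_simp
  linear_combination (-(x ^ 2 - 2 * r₁) * x ^ m * r₁ * Fintype.card V₂) * hhandshake

theorem charpoly_adjM_seJoin [Nonempty V₁] [Nonempty V₂] (h₁ : G₁.IsRegularOfDegree r₁)
    (h₂ : G₂.IsRegularOfDegree r₂) :
    X ^ Fintype.card V₁ * (X ^ 2 - C (2 * r₁ : ℝ)) * (X - C (r₂ : ℝ)) *
        (adjM (seJoin G₁ G₂)).charpoly =
      X ^ Fintype.card G₁.edgeSet * (adjM G₁).charpoly.comp (X ^ 2 - C (r₁ : ℝ)) *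
        (adjM G₂).charpoly *
        (X ^ 3 - C (r₂ : ℝ) * X ^ 2 - C (Fintype.card G₁.edgeSet * Fintype.card V₂ + 2 * r₁ : ℝ) * X
          + C (2 * r₁ * r₂ : ℝ)) := by
  have hmonic : (X * (adjM G₁).charpoly.comp (X ^ 2 - C (r₁ : ℝ)) * (adjM G₂).charpoly).Monic :=
    (monic_X.mul ((charpoly_monic _).comp (monic_X_pow_sub_C _ two_ne_zero)
      (by rw [natDegree_X_pow_sub_C]; exact two_ne_zero))).mul (charpoly_monic _)
  refine eq_of_eval_eq_of_eval_ne_zero hmonic.ne_zero fun x hx => ?_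
  simp only [eval_mul, eval_X, eval_comp, eval_add, eval_sub, eval_pow, eval_C,
    eval_charpoly_eq_det_smul_one_sub, mul_ne_zero_iff] at hx ⊢
  obtain ⟨⟨hx, hA₁⟩, hA₂⟩ := hx
  exact det_smul_one_sub_adjM_seJoin_of_det_ne_zero h₁ h₂ hx hA₁ hA₂

end seJoin

end SimpleGraph

theorem adj_spectrum_seJoin_regular_general (n₁ m₁ n₂ r₁ r₂ : ℕ) (hn₁ : 0 < n₁) (hn₂ : 0 < n₂)
    (G₁ : SimpleGraph (Fin n₁)) (hreg₁ : G₁.IsRegularOfDegree r₁)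
    (hm₁ : G₁.edgeFinset.card = m₁)
    (G₂ : SimpleGraph (Fin n₂)) (hreg₂ : G₂.IsRegularOfDegree r₂)
    (lam₁ : Fin n₁ → ℝ) (hlam₁0 : lam₁ ⟨0, hn₁⟩ = r₁)
    (hchar₁ : ∀ x : ℝ,
      (x • (1 : Matrix (Fin n₁) (Fin n₁) ℝ) - adjM G₁).det = ∏ i, (x - lam₁ i))
    (lam₂ : Fin n₂ → ℝ) (hlam₂0 : lam₂ ⟨0, hn₂⟩ = r₂)
    (hchar₂ : ∀ x : ℝ,
      (x • (1 : Matrix (Fin n₂) (Fin n₂) ℝ) - adjM G₂).det = ∏ i, (x - lam₂ i))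
    (x : ℝ) (hx0 : x ≠ 0) :
    (x • (1 : Matrix (Fin n₁ ⊕ (G₁.edgeSet ⊕ Fin n₂)) (Fin n₁ ⊕ (G₁.edgeSet ⊕ Fin n₂)) ℝ)
        - adjM (seJoin G₁ G₂)).det
      = (∏ i ∈ Finset.univ.erase ⟨0, hn₂⟩, (x - lam₂ i))
        * x ^ ((m₁ : ℤ) - (n₁ : ℤ))
        * (∏ j ∈ Finset.univ.erase ⟨0, hn₁⟩, (x ^ 2 - (r₁ + lam₁ j)))
        * (x ^ 3 - r₂ * x ^ 2 - (m₁ * n₂ + 2 * r₁) * x + 2 * r₁ * r₂) := by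
  have : Nonempty (Fin n₁) := ⟨⟨0, hn₁⟩⟩
  have : Nonempty (Fin n₂) := ⟨⟨0, hn₂⟩⟩
  have key := SimpleGraph.charpoly_adjM_seJoin (G₁ := G₁) (G₂ := G₂) hreg₁ hreg₂
  rw [charpoly_eq_prod_of_det hchar₁, charpoly_eq_prod_of_det hchar₂, Polynomial.prod_comp,
    ← mul_prod_erase univ _ (mem_univ ⟨0, hn₁⟩), ← mul_prod_erase univ _ (mem_univ ⟨0, hn₂⟩),
    hlam₁0, hlam₂0, ← SimpleGraph.edgeFinset_card, hm₁, Fintype.card_fin, Fintype.card_fin] at key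
  simp only [sub_comp, X_comp, C_comp, sub_sub, ← C_add] at key
  have hne : (X ^ 2 - C (2 * r₁ : ℝ)) * (X - C (r₂ : ℝ)) ≠ 0 :=
    ((monic_X_pow_sub_C _ two_ne_zero).mul (monic_X_sub_C _)).ne_zero
  have hfac : X ^ n₁ * (adjM (seJoin G₁ G₂)).charpoly =
      X ^ m₁ * (∏ j ∈ univ.erase ⟨0, hn₁⟩, (X ^ 2 - C (r₁ + lam₁ j))) *
        (∏ i ∈ univ.erase ⟨0, hn₂⟩, (X - C (lam₂ i))) *
        (X ^ 3 - C (r₂ : ℝ) * X ^ 2 - C (m₁ * n₂ + 2 * r₁ : ℝ) * X + C (2 * r₁ * r₂ : ℝ)) := by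
    refine mul_left_cancel₀ hne ?_
    simp only [map_add, map_mul, map_natCast, map_ofNat] at key ⊢
    linear_combination key
  have hx := congrArg (eval x) hfac
  simp only [eval_mul, eval_pow, eval_X, eval_prod, eval_sub, eval_add, eval_C,
    eval_charpoly_eq_det_smul_one_sub] at hx
  rw [zpow_sub₀ hx0, zpow_natCast, zpow_natCast]
  field_simp
  linear_combination hx

/-- The `A`-spectrum of the subdivision-edge join `G₁ ∨̲ G₂` for regular graphs `G₁`
(degree `r₁`) and `G₂` (degree `r₂`): the eigenvalues `λᵢ(G₂)` for `i ≥ 2`, `0` with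
multiplicity `m₁−n₁`, `±√(r₁+λⱼ(G₁))` for `j ≥ 2`, and the three roots of
`x³ − r₂x² − (m₁n₂ + 2r₁)x + 2r₁r₂ = 0`. -/
theorem adj_spectrum_seJoin_regular (n₁ m₁ n₂ r₁ r₂ : ℕ) (hn₁ : 0 < n₁) (hn₂ : 0 < n₂)
    (G₁ : SimpleGraph (Fin n₁)) (hreg₁ : G₁.IsRegularOfDegree r₁)
    (hm₁ : G₁.edgeFinset.card = m₁)
    (G₂ : SimpleGraph (Fin n₂)) (hreg₂ : G₂.IsRegularOfDegree r₂)
    (lam₁ : Fin n₁ → ℝ) (hlam₁ : Antitone lam₁) (hlam₁0 : lam₁ ⟨0, hn₁⟩ = r₁)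
    (hchar₁ : ∀ x : ℝ,
      (x • (1 : Matrix (Fin n₁) (Fin n₁) ℝ) - adjM G₁).det = ∏ i, (x - lam₁ i))
    (lam₂ : Fin n₂ → ℝ) (hlam₂ : Antitone lam₂) (hlam₂0 : lam₂ ⟨0, hn₂⟩ = r₂)
    (hchar₂ : ∀ x : ℝ,
      (x • (1 : Matrix (Fin n₂) (Fin n₂) ℝ) - adjM G₂).det = ∏ i, (x - lam₂ i))
    (x : ℝ) (hx0 : x ≠ 0) :
    (x • (1 : Matrix (Fin n₁ ⊕ (G₁.edgeSet ⊕ Fin n₂)) (Fin n₁ ⊕ (G₁.edgeSet ⊕ Fin n₂)) ℝ)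
        - adjM (seJoin G₁ G₂)).det
      = (∏ i ∈ Finset.univ.erase ⟨0, hn₂⟩, (x - lam₂ i))
        * x ^ ((m₁ : ℤ) - (n₁ : ℤ))
        * (∏ j ∈ Finset.univ.erase ⟨0, hn₁⟩, (x ^ 2 - (r₁ + lam₁ j)))
        * (x ^ 3 - r₂ * x ^ 2 - (m₁ * n₂ + 2 * r₁) * x + 2 * r₁ * r₂) :=
  adj_spectrum_seJoin_regular_general n₁ m₁ n₂ r₁ r₂ hn₁ hn₂ G₁ hreg₁ hm₁ G₂ hreg₂ lam₁ hlam₁0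
    hchar₁ lam₂ hlam₂0 hchar₂ x hx0
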